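/- arXiv:2201.04220 — 5 statements merged into one kernel-verified Lean document; each statement's English description precedes it below -/
import Mathlib

section
/- For every integer m ≥ 3, the semigroup S_m generated by {(1,0,1),(1,1,1),(m,m+1,1),(0,0,1)} in ℕ^3 is not saturated. Specifically, if m = 2r+1 with r ≥ 1, then (r+1)·(2,2,1) ∈ S_m but (2,2,1) ∉ S_m; if m = 2r with r ≥ 2, then (r+1)·(2,2,1) ∈ S_m but (2,2,1) ∉ S_m. -/
theorem stmt_5 (m : ℕ) (hm : 3 ≤ m) :
    (((2,2,1) : ℕ × ℕ × ℕ) ∉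
      AddSubmonoid.closure ({(1,0,1),(1,1,1),(m,m+1,1),(0,0,1)} : Set (ℕ × ℕ × ℕ))) ∧
    (∀ r : ℕ, (m = 2*r+1 ∧ 1 ≤ r) ∨ (m = 2*r ∧ 2 ≤ r) →
      (r+1) • ((2,2,1) : ℕ × ℕ × ℕ) ∈
        AddSubmonoid.closure ({(1,0,1),(1,1,1),(m,m+1,1),(0,0,1)} : Set (ℕ × ℕ × ℕ))) := by
  set S : Set (ℕ × ℕ × ℕ) := {(1,0,1),(1,1,1),(m,m+1,1),(0,0,1)} with hS
  constructor
  · intro h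
    have key : ∀ v ∈ AddSubmonoid.closure S,
        (v.2.2 = 0 → v = 0) ∧ (v.2.2 = 1 → v ∈ S) := by
      intro v hv
      induction hv using AddSubmonoid.closure_induction with
      | mem x hx =>
        refine ⟨fun h0 => absurd h0 ?_, fun _ => hx⟩
        simp only [hS, Set.mem_insert_iff, Set.mem_singleton_iff] at hx
        rcases hx with rfl | rfl | rfl | rfl <;> simp
      | zero => simp
      | add x y hx hy ihx ihy =>
        have hadd : (x+y).2.2 = x.2.2 + y.2.2 := rfl
        constructor
        · intro h0
          rw [hadd] at h0
          rw [ihx.1 (by omega), ihy.1 (by omega), add_zero]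
        · intro h1
          rw [hadd] at h1
          rcases Nat.le_one_iff_eq_zero_or_eq_one.mp (le_of_eq_of_le rfl (by omega : x.2.2 ≤ 1)) with hx0 | hx1
          · rw [ihx.1 hx0, zero_add]; exact ihy.2 (by omega)
          · rw [ihy.1 (by omega), add_zero]; exact ihx.2 hx1
    have h22 : ((2,2,1) : ℕ × ℕ × ℕ) ∈ S := (key _ h).2 rfl
    simp only [hS, Set.mem_insert_iff, Set.mem_singleton_iff, Prod.mk.injEq] at h22
    omega
  · rintro r (⟨rfl, hr⟩ | ⟨rfl, hr⟩)
    · have he : (r+1) • ((2,2,1) : ℕ × ℕ × ℕ)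
          = ((2*r+1, 2*r+1+1, 1) + (1,0,1)) + (r-1) • (0,0,1) := by
        simp only [Prod.smul_mk, smul_eq_mul, Prod.mk_add_mk, Prod.mk.injEq]
        omega
      rw [he]
      exact AddSubmonoid.add_mem _
        (AddSubmonoid.add_mem _
          (AddSubmonoid.subset_closure (by simp [hS]))
          (AddSubmonoid.subset_closure (by simp [hS])))
        (AddSubmonoid.nsmul_mem _ (AddSubmonoid.subset_closure (by simp [hS])) _)
    · have he : (r+1) • ((2,2,1) : ℕ × ℕ × ℕ)
          = (((2*r, 2*r+1, 1) + (1,1,1)) + (1,0,1)) + (r-2) • (0,0,1) := by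
        simp only [Prod.smul_mk, smul_eq_mul, Prod.mk_add_mk, Prod.mk.injEq]
        omega
      rw [he]
      exact AddSubmonoid.add_mem _
        (AddSubmonoid.add_mem _
          (AddSubmonoid.add_mem _
            (AddSubmonoid.subset_closure (by simp [hS]))
            (AddSubmonoid.subset_closure (by simp [hS])))
          (AddSubmonoid.subset_closure (by simp [hS])))
        (AddSubmonoid.nsmul_mem _ (AddSubmonoid.subset_closure (by simp [hS])) _)
end

section
/- With the notation above (S pointed, b ≠ 0, witnesses k unique): if B ≠ C are two elements of B_{(z,λ)}, then B \ {n+1} ≠ C \ {n+1}. Consequently the map B ↦ B \ {n+1} is injective on B_{(z,λ)} and |B_{(z,λ)}| ≤ |A_z|. -/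
theorem stmt_13 (d n : ℕ) (a : Fin n → Fin d → ℤ) (w : Fin n → ℕ)
    (hpointed : ∀ x ∈ AddSubmonoid.closure (Set.range a),
      -x ∈ AddSubmonoid.closure (Set.range a) → x = 0)
    (b : Fin d → ℤ) (hb : b ∈ AddSubmonoid.closure (Set.range a)) (hb0 : b ≠ 0)
    (dw : ℕ) (z : Fin d → ℤ) (lam : ℕ) :
    (Set.InjOn (fun B : Finset (Option (Fin n)) => B.erase none)
      {B : Finset (Option (Fin n)) | ∃ k : ℕ, ((z, (lam : ℤ)) : (Fin d → ℤ) × ℤ)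
        = ∑ o ∈ B, (Option.elim o (((0 : Fin d → ℤ), (1 : ℤ)) : (Fin d → ℤ) × ℤ)
            (fun i => (a i, (w i : ℤ)))) + k • (b, (dw : ℤ))}) ∧
    Set.ncard {B : Finset (Option (Fin n)) | ∃ k : ℕ, ((z, (lam : ℤ)) : (Fin d → ℤ) × ℤ)
        = ∑ o ∈ B, (Option.elim o (((0 : Fin d → ℤ), (1 : ℤ)) : (Fin d → ℤ) × ℤ)
            (fun i => (a i, (w i : ℤ)))) + k • (b, (dw : ℤ))}
      ≤ Set.ncard {A : Finset (Fin n) | ∃ k : ℕ, z = ∑ i ∈ A, a i + k • b} := by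
  set f : Option (Fin n) → (Fin d → ℤ) × ℤ := fun o =>
    Option.elim o (((0 : Fin d → ℤ), (1 : ℤ)) : (Fin d → ℤ) × ℤ)
      (fun i => (a i, (w i : ℤ))) with hf
  -- basic facts about first and second coordinates of sums
  have hfst : ∀ B : Finset (Option (Fin n)), ∑ o ∈ B, (f o).1
      = ∑ o ∈ B.erase none, (f o).1 := by
    intro B
    exact (Finset.sum_erase B (by simp [hf])).symm
  have hsnd : ∀ B : Finset (Option (Fin n)), ∑ o ∈ B, (f o).2
      = ∑ o ∈ B.erase none, (f o).2 + (if none ∈ B then (1 : ℤ) else 0) := by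
    intro B
    by_cases h : none ∈ B
    · rw [if_pos h, ← Finset.add_sum_erase B _ h]
      simp [hf, add_comm]
    · rw [if_neg h, Finset.erase_eq_of_notMem h, add_zero]
  have hinj : Set.InjOn (fun B : Finset (Option (Fin n)) => B.erase none)
      {B : Finset (Option (Fin n)) | ∃ k : ℕ, ((z, (lam : ℤ)) : (Fin d → ℤ) × ℤ)
        = ∑ o ∈ B, f o + k • (b, (dw : ℤ))} := by
    intro B hB C hC hBC
    simp only at hBC
    obtain ⟨k, hk⟩ := hB
    obtain ⟨k', hk'⟩ := hC
    have hk1 : z = ∑ o ∈ B, (f o).1 + (k : ℤ) • b := by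
      have := congrArg Prod.fst hk
      simpa [Prod.fst_sum] using this
    have hk1' : z = ∑ o ∈ C, (f o).1 + (k' : ℤ) • b := by
      have := congrArg Prod.fst hk'
      simpa [Prod.fst_sum] using this
    have hkk' : k = k' := by
      have hsb : (k : ℤ) • b = (k' : ℤ) • b := by
        rw [hfst B, hBC, ← hfst C] at hk1
        exact add_left_cancel (hk1.symm.trans hk1')
      exact_mod_cast smul_left_injective ℤ hb0 hsb
    have hk2 : (lam : ℤ) = ∑ o ∈ B, (f o).2 + (k : ℤ) * dw := by
      have := congrArg Prod.snd hk
      simpa [Prod.snd_sum] using this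
    have hk2' : (lam : ℤ) = ∑ o ∈ C, (f o).2 + (k' : ℤ) * dw := by
      have := congrArg Prod.snd hk'
      simpa [Prod.snd_sum] using this
    have hsnd_eq : ∑ o ∈ B, (f o).2 = ∑ o ∈ C, (f o).2 := by
      subst hkk'
      have := hk2.symm.trans hk2'
      exact add_right_cancel this
    rw [hsnd B, hsnd C, hBC] at hsnd_eq
    have hnone : (none ∈ B) ↔ (none ∈ C) := by
      have h := add_left_cancel hsnd_eq
      constructor
      · intro h1
        by_contra h2
        rw [if_pos h1, if_neg h2] at h
        norm_num at h
      · intro h2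
        by_contra h1
        rw [if_neg h1, if_pos h2] at h
        norm_num at h
    ext o
    cases o with
    | none => exact hnone
    | some i =>
      constructor
      · intro h
        have : some i ∈ B.erase none := Finset.mem_erase.mpr ⟨by simp, h⟩
        rw [hBC] at this
        exact (Finset.mem_erase.mp this).2
      · intro h
        have : some i ∈ C.erase none := Finset.mem_erase.mpr ⟨by simp, h⟩
        rw [← hBC] at this
        exact (Finset.mem_erase.mp this).2
  refine ⟨hinj, ?_⟩
  -- injection into the A-set via preimage under `some`
  set g : Finset (Option (Fin n)) → Finset (Fin n) := fun B =>
    B.preimage some (Set.injOn_of_injective (Option.some_injective _)) with hg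
  have herase : ∀ B : Finset (Option (Fin n)), (g B).map ⟨some, Option.some_injective _⟩
      = B.erase none := by
    intro B
    ext o
    cases o <;> simp [hg, Finset.mem_preimage]
  have hsum : ∀ B : Finset (Option (Fin n)), ∑ i ∈ g B, a i = ∑ o ∈ B, (f o).1 := by
    intro B
    rw [hfst B, ← herase B, Finset.sum_map]
    simp [hf]
  apply Set.ncard_le_ncard_of_injOn g
  · intro B hB
    obtain ⟨k, hk⟩ := hB
    refine ⟨k, ?_⟩
    have := congrArg Prod.fst hk
    simp only [Prod.fst_sum, Prod.fst_add, Prod.smul_fst] at this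
    rw [this, hsum B]
  · intro B hB C hC hgBC
    apply hinj hB hC
    simp only
    rw [← herase B, ← herase C, hgBC]
end

section
/- With the same setup, suppose A_z = {A_1,...,A_r} with r ≥ 1 and set l_j = Σ_{i∈A_j} w_i + k_{A_j} d_w for each j. Let λ ∈ ℕ. Then B_{(z,λ)} ≠ ∅ if and only if λ = l_j or λ = l_j + 1 for some j ∈ {1,...,r}. -/
lemma map_some_erase {α : Type*} [DecidableEq α] (B : Finset (Option α)) :
    (B.eraseNone).map Function.Embedding.some = B.erase none := by
  ext o; cases o <;> simp [Finset.mem_eraseNone]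

lemma sum_option {α : Type*} [DecidableEq α] {M : Type*} [AddCommMonoid M]
    (B : Finset (Option α)) (f : Option α → M) :
    ∑ o ∈ B, f o = (∑ i ∈ B.eraseNone, f (some i)) + (if none ∈ B then f none else 0) := by
  have key : ∑ i ∈ B.eraseNone, f (some i) = ∑ o ∈ B.erase none, f o := by
    rw [← map_some_erase, Finset.sum_map]; rfl
  by_cases h : none ∈ B
  · rw [if_pos h, key, Finset.sum_erase_add B f h]
  · rw [if_neg h, add_zero, key, Finset.erase_eq_of_notMem h]

theorem stmt_14 (d n : ℕ) (a : Fin n → Fin d → ℤ) (w : Fin n → ℕ)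
    (hpointed : ∀ x ∈ AddSubmonoid.closure (Set.range a),
      -x ∈ AddSubmonoid.closure (Set.range a) → x = 0)
    (b : Fin d → ℤ) (hb : b ∈ AddSubmonoid.closure (Set.range a)) (hb0 : b ≠ 0)
    (dw : ℕ) (z : Fin d → ℤ) (lam : ℕ)
    (hA : {A : Finset (Fin n) | ∃ k : ℕ, z = ∑ i ∈ A, a i + k • b}.Nonempty) :
    (∃ B : Finset (Option (Fin n)), ∃ k : ℕ, ((z, (lam : ℤ)) : (Fin d → ℤ) × ℤ)
        = ∑ o ∈ B, (Option.elim o (((0 : Fin d → ℤ), (1 : ℤ)) : (Fin d → ℤ) × ℤ)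
            (fun i => (a i, (w i : ℤ)))) + k • (b, (dw : ℤ)))
    ↔ ∃ (A : Finset (Fin n)) (kA : ℕ), z = ∑ i ∈ A, a i + kA • b ∧
        (lam = ∑ i ∈ A, w i + kA * dw ∨ lam = ∑ i ∈ A, w i + kA * dw + 1) := by
  constructor
  · rintro ⟨B, k, hBk⟩
    have h1 := congrArg Prod.fst hBk
    have h2 := congrArg Prod.snd hBk
    simp only [Prod.fst_add, Prod.snd_add, Prod.fst_sum, Prod.snd_sum, Prod.smul_fst,
      Prod.smul_snd] at h1 h2
    rw [sum_option] at h1 h2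
    refine ⟨B.eraseNone, k, ?_, ?_⟩
    · simp only [Option.elim] at h1
      rcases em (none ∈ B) with h | h
      · rw [if_pos h, add_zero] at h1; exact h1
      · rw [if_neg h, add_zero] at h1; exact h1
    · simp only [Option.elim] at h2
      by_cases h : none ∈ B
      · right
        rw [if_pos h] at h2
        have : (lam : ℤ) = ((∑ i ∈ B.eraseNone, w i + k * dw + 1 : ℕ) : ℤ) := by
          rw [h2]; push_cast [nsmul_eq_mul]; ring
        exact_mod_cast this
      · left
        rw [if_neg h, add_zero] at h2
        have : (lam : ℤ) = ((∑ i ∈ B.eraseNone, w i + k * dw : ℕ) : ℤ) := by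
          rw [h2]; push_cast [nsmul_eq_mul]; ring
        exact_mod_cast this
  · rintro ⟨A, kA, hz, hl | hl⟩
    · refine ⟨A.map Function.Embedding.some, kA, ?_⟩
      rw [Finset.sum_map]
      refine Prod.ext ?_ ?_
      · simp only [Prod.fst_add, Prod.fst_sum, Prod.smul_fst, Function.Embedding.some_apply,
          Option.elim]
        exact hz
      · simp only [Prod.snd_add, Prod.snd_sum, Prod.smul_snd, Function.Embedding.some_apply,
          Option.elim]
        rw [hl]; push_cast [nsmul_eq_mul]; ring
    · refine ⟨insert none (A.map Function.Embedding.some), kA, ?_⟩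
      have hn : (none : Option (Fin n)) ∉ A.map Function.Embedding.some := by simp
      rw [Finset.sum_insert hn, Finset.sum_map]
      refine Prod.ext ?_ ?_
      · simp only [Prod.fst_add, Prod.fst_sum, Prod.smul_fst, Function.Embedding.some_apply,
          Option.elim]
        simpa using hz
      · simp only [Prod.snd_add, Prod.snd_sum, Prod.smul_snd, Function.Embedding.some_apply,
          Option.elim]
        rw [hl]; push_cast [nsmul_eq_mul]; ring
end

section
/- Let A = {a_1,...,a_n} ⊂ ℤ^d, let a ∈ ℕA satisfy a + (ℝ_{≥0}ℕA ∩ ℤ^d) ⊆ ℕA, and let w ∈ ℕ^n. Then there exists δ ∈ ℕ such that (a,δ) ∈ ℕA_w and (a,δ) + (ℝ_{≥0}A_w ∩ ℤ^{d+1}) ⊆ ℕA_w, where A_w = {(a_1,w_1),...,(a_n,w_n),(0,...,0,1)} ⊂ ℤ^{d+1}. -/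
private lemma closure_range_iff_nat {M : Type*} [AddCommMonoid M] {ι : Type*} [Fintype ι]
    (v : ι → M) (x : M) :
    x ∈ AddSubmonoid.closure (Set.range v) ↔ ∃ c : ι → ℕ, ∑ i, c i • v i = x := by
  rw [← Submodule.span_nat_eq_addSubmonoidClosure, Submodule.mem_toAddSubmonoid]
  exact Submodule.mem_span_range_iff_exists_fun ℕ

private lemma gen_mem (n d : ℕ) (a : Fin n → Fin d → ℤ) (w : Fin n → ℕ)
    (u : Fin n → ℕ) (k : ℕ) :
    (∑ i, u i • ((a i, (w i : ℤ)) : (Fin d → ℤ) × ℤ)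
        + k • (((0 : Fin d → ℤ), (1 : ℤ)) : (Fin d → ℤ) × ℤ)) ∈
      AddSubmonoid.closure
        (Set.range (fun i : Fin n => ((a i, (w i : ℤ)) : (Fin d → ℤ) × ℤ))
          ∪ {(((0 : Fin d → ℤ), (1 : ℤ)) : (Fin d → ℤ) × ℤ)}) := by
  refine add_mem (sum_mem fun i _ => nsmul_mem (AddSubmonoid.subset_closure ?_) _)
    (nsmul_mem (AddSubmonoid.subset_closure ?_) _)
  · exact Or.inl ⟨i, rfl⟩
  · exact Or.inr rfl

theorem stmt_17 (n d : ℕ) (a : Fin n → Fin d → ℤ) (w : Fin n → ℕ) (aelt : Fin d → ℤ)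
    (haS : aelt ∈ AddSubmonoid.closure (Set.range a))
    (happrox : ∀ x : Fin d → ℤ,
      (∃ r : Fin n → ℝ, (∀ i, 0 ≤ r i) ∧ ∀ j, (x j : ℝ) = ∑ i, r i * (a i j : ℝ)) →
      aelt + x ∈ AddSubmonoid.closure (Set.range a)) :
    ∃ δ : ℕ,
      ((aelt, (δ : ℤ)) : (Fin d → ℤ) × ℤ) ∈ AddSubmonoid.closure
        (Set.range (fun i : Fin n => ((a i, (w i : ℤ)) : (Fin d → ℤ) × ℤ))
          ∪ {(((0 : Fin d → ℤ), (1 : ℤ)) : (Fin d → ℤ) × ℤ)}) ∧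
      ∀ y : (Fin d → ℤ) × ℤ,
        (∃ (r : Fin n → ℝ) (rlast : ℝ), (∀ i, 0 ≤ r i) ∧ 0 ≤ rlast ∧
          (∀ j, ((y.1 j : ℝ)) = ∑ i, r i * (a i j : ℝ)) ∧
          (y.2 : ℝ) = ∑ i, r i * (w i : ℝ) + rlast) →
        (aelt, (δ : ℤ)) + y ∈ AddSubmonoid.closure
          (Set.range (fun i : Fin n => ((a i, (w i : ℤ)) : (Fin d → ℤ) × ℤ))
            ∪ {(((0 : Fin d → ℤ), (1 : ℤ)) : (Fin d → ℤ) × ℤ)}) := by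
  classical
  obtain ⟨c, hc⟩ := (closure_range_iff_nat a aelt).mp haS
  set S : Set (Fin d → ℤ) := {x | ∃ t : Fin n → ℝ, (∀ i, 0 ≤ t i ∧ t i ≤ 1) ∧
    ∀ j, (x j : ℝ) = ∑ i, t i * (a i j : ℝ)} with hSdef
  have hSfin : S.Finite := by
    have hsub : S ⊆ Set.pi Set.univ
        (fun j => Set.Icc (-(∑ i, |a i j|)) (∑ i, |a i j|)) := by
      rintro x ⟨t, ht, hx⟩ j _
      have h1 : |(x j : ℝ)| ≤ ∑ i, |(a i j : ℝ)| := by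
        rw [hx j]
        refine (Finset.abs_sum_le_sum_abs _ _).trans (Finset.sum_le_sum fun i _ => ?_)
        rw [abs_mul]
        have h2 := abs_nonneg ((a i j : ℝ))
        have h3 : |t i| ≤ 1 := abs_le.mpr ⟨by linarith [(ht i).1], (ht i).2⟩
        nlinarith
      have h4 : |x j| ≤ ∑ i, |a i j| := by
        have : ((|x j| : ℤ) : ℝ) ≤ ((∑ i, |a i j| : ℤ) : ℝ) := by push_cast; exact h1
        exact_mod_cast this
      exact abs_le.mp h4
    exact (Set.Finite.pi fun j => Set.finite_Icc _ _).subset hsub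
  have hrep : ∀ x ∈ S, ∃ m : Fin n → ℕ, ∑ i, m i • a i = aelt + x := by
    intro x hx
    obtain ⟨t, ht, hxt⟩ := hx
    exact (closure_range_iff_nat a _).mp (happrox x ⟨t, fun i => (ht i).1, hxt⟩)
  choose m hm using hrep
  set δ0 : ℕ := hSfin.toFinset.sup
    (fun x => if hx : x ∈ S then ∑ i, m x hx i * w i else 0) with hδ0def
  refine ⟨(∑ i, c i * w i) + δ0, ?_, ?_⟩
  · have heq : ((aelt, (((∑ i, c i * w i) + δ0 : ℕ) : ℤ)) : (Fin d → ℤ) × ℤ)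
        = ∑ i, c i • ((a i, (w i : ℤ)) : (Fin d → ℤ) × ℤ)
          + δ0 • (((0 : Fin d → ℤ), (1 : ℤ)) : (Fin d → ℤ) × ℤ) := by
      refine Prod.ext ?_ ?_
      · simp only [Prod.fst_add, Prod.fst_sum, Prod.smul_mk, smul_zero, add_zero]
        exact hc.symm
      · simp only [Prod.snd_add, Prod.snd_sum, Prod.smul_mk, smul_eq_mul, nsmul_eq_mul,
          mul_one]
        push_cast
        ring
    rw [heq]
    exact gen_mem n d a w c δ0
  · rintro y ⟨r, rlast, hr, hrlast, hy1, hy2⟩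
    set q : Fin n → ℕ := fun i => (⌊r i⌋).toNat with hqdef
    have hqR : ∀ i, ((q i : ℝ)) = ((⌊r i⌋ : ℤ) : ℝ) := by
      intro i
      have h := Int.toNat_of_nonneg (Int.floor_nonneg.2 (hr i))
      rw [hqdef]
      exact_mod_cast congrArg (fun t : ℤ => (t : ℝ)) h
    have hqr : ∀ i, ((q i : ℝ)) ≤ r i := fun i => by rw [hqR i]; exact Int.floor_le _
    set z : Fin d → ℤ := y.1 - (fun j => ∑ i, (q i : ℤ) * a i j) with hzdef
    have hzj : ∀ j, z j = y.1 j - ∑ i, (q i : ℤ) * a i j := by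
      intro j; rw [hzdef]; simp
    have hzS : z ∈ S := by
      refine ⟨fun i => r i - (q i : ℝ), fun i => ⟨?_, ?_⟩, fun j => ?_⟩
      · dsimp only
        linarith [hqr i]
      · dsimp only
        rw [hqR i]
        have := Int.lt_floor_add_one (r i)
        linarith
      · dsimp only
        have hcast : (z j : ℝ) = (y.1 j : ℝ) - ∑ i, (q i : ℝ) * (a i j : ℝ) := by
          rw [hzj j]; push_cast; ring
        rw [hcast, hy1 j, ← Finset.sum_sub_distrib]
        exact Finset.sum_congr rfl fun i _ => by ring
    have hmz := hm z hzS
    have hwbound : ∑ i, m z hzS i * w i ≤ δ0 := by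
      have hmem : z ∈ hSfin.toFinset := hSfin.mem_toFinset.mpr hzS
      have h := Finset.le_sup
        (f := fun x => if hx : x ∈ S then ∑ i, m x hx i * w i else 0) hmem
      simp only [dif_pos hzS] at h
      exact h
    set u : Fin n → ℕ := fun i => m z hzS i + q i with hudef
    have hqw : (∑ i, (q i : ℤ) * w i) ≤ y.2 := by
      have hreal : ((∑ i, (q i : ℤ) * w i : ℤ) : ℝ) ≤ (y.2 : ℝ) := by
        push_cast
        rw [hy2]
        have hle : ∑ i, (q i : ℝ) * (w i : ℝ) ≤ ∑ i, r i * (w i : ℝ) :=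
          Finset.sum_le_sum fun i _ => by
            have h1 := hqr i
            have h2 : (0:ℝ) ≤ (w i : ℝ) := by positivity
            nlinarith
        linarith
      exact_mod_cast hreal
    set K : ℤ := (((∑ i, c i * w i) + δ0 : ℕ) : ℤ) + y.2 - ∑ i, (u i : ℤ) * w i with hKdef
    have hK : 0 ≤ K := by
      have h1 : ∑ i, (u i : ℤ) * w i
          = (∑ i, ((m z hzS i : ℤ) * w i)) + ∑ i, (q i : ℤ) * w i := by
        rw [← Finset.sum_add_distrib]
        exact Finset.sum_congr rfl fun i _ => by rw [hudef]; push_cast; ring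
      have h2 : (∑ i, ((m z hzS i : ℤ) * w i)) ≤ (δ0 : ℤ) := by
        calc (∑ i, ((m z hzS i : ℤ) * w i)) = ((∑ i, m z hzS i * w i : ℕ) : ℤ) := by
              push_cast; ring
        _ ≤ (δ0 : ℤ) := by exact_mod_cast hwbound
      have h3 : (0:ℤ) ≤ ∑ i, (c i : ℤ) * w i :=
        Finset.sum_nonneg fun i _ => by positivity
      rw [hKdef, h1]
      push_cast
      push_cast at h2 h3
      linarith [hqw]
    have heq : (((aelt, (((∑ i, c i * w i) + δ0 : ℕ) : ℤ)) : (Fin d → ℤ) × ℤ) + y)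
        = ∑ i, u i • ((a i, (w i : ℤ)) : (Fin d → ℤ) × ℤ)
          + K.toNat • (((0 : Fin d → ℤ), (1 : ℤ)) : (Fin d → ℤ) × ℤ) := by
      refine Prod.ext ?_ ?_
      · simp only [Prod.fst_add, Prod.fst_sum, Prod.smul_mk, smul_zero, add_zero]
        have hsplit : ∑ i, u i • a i = (∑ i, m z hzS i • a i) + ∑ i, q i • a i := by
          rw [← Finset.sum_add_distrib]
          exact Finset.sum_congr rfl fun i _ => by rw [hudef]; dsimp only; rw [add_smul]
        rw [hsplit, hmz]
        funext j
        have hqa : (∑ i, q i • a i) j = ∑ i, (q i : ℤ) * a i j := by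
          rw [Finset.sum_apply]
          exact Finset.sum_congr rfl fun i _ => by simp
        simp only [Pi.add_apply]
        rw [hqa, hzj j]
        ring
      · simp only [Prod.snd_add, Prod.snd_sum, Prod.smul_mk, smul_eq_mul, nsmul_eq_mul,
          mul_one]
        have hKt : ((K.toNat : ℤ)) = K := Int.toNat_of_nonneg hK
        rw [hKt, hKdef]
        push_cast
        ring
    rw [heq]
    exact gen_mem n d a w u K.toNat
end

section
/- Let A = {a_1,...,a_n} ⊂ ℤ^d, a ∈ ℕA with a + cl(ℕA) ⊆ ℕA, and w ∈ ℕ^n. Let C_w = {Σ_{i=1}^n α_i(a_i,w_i) + α_{n+1}(0,...,0,1) : α_i ∈ [0,1] ⊂ ℝ}. Then for every (c, c_{n+1}) ∈ C_w ∩ ℤ^{d+1}, there exists δ ∈ ℕ such that (a,δ) ∈ ℕA_w and (a,δ) + (c,c_{n+1}) ∈ ℕA_w. -/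
lemma exists_rep' {M : Type*} [AddCommMonoid M] {n : ℕ} (v : Fin n → M) {x : M}
    (hx : x ∈ AddSubmonoid.closure (Set.range v)) :
    ∃ m : Fin n → ℕ, x = ∑ i, m i • v i := by
  induction hx using AddSubmonoid.closure_induction with
  | mem y hy =>
    obtain ⟨i, rfl⟩ := hy
    exact ⟨Pi.single i 1, by simp [Pi.single_apply, ite_smul]⟩
  | zero => exact ⟨0, by simp⟩
  | add x y _ _ hx hy =>
    obtain ⟨m, rfl⟩ := hx; obtain ⟨m', rfl⟩ := hy
    exact ⟨m + m', by simp [add_smul, Finset.sum_add_distrib]⟩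

lemma mem_rep (n d : ℕ) (a : Fin n → Fin d → ℤ) (w : Fin n → ℕ) (m : Fin n → ℕ) (k : ℕ) :
    ((∑ i, m i • a i, ((∑ i, m i * w i : ℕ) : ℤ) + (k : ℤ)) : (Fin d → ℤ) × ℤ) ∈
      AddSubmonoid.closure
        (Set.range (fun i : Fin n => ((a i, (w i : ℤ)) : (Fin d → ℤ) × ℤ))
          ∪ {(((0 : Fin d → ℤ), (1 : ℤ)) : (Fin d → ℤ) × ℤ)}) := by
  have : ((∑ i, m i • a i, ((∑ i, m i * w i : ℕ) : ℤ) + (k : ℤ)) : (Fin d → ℤ) × ℤ)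
      = ∑ i, m i • ((a i, (w i : ℤ)) : (Fin d → ℤ) × ℤ) + k • (((0 : Fin d → ℤ), (1 : ℤ))) := by
    ext j
    · simp [Prod.fst_sum]
    · push_cast [Prod.snd_sum]
      simp [Prod.snd_sum, mul_comm]
  rw [this]
  refine add_mem (AddSubmonoid.sum_mem _ fun i _ => AddSubmonoid.nsmul_mem _ ?_ _)
    (AddSubmonoid.nsmul_mem _ ?_ _)
  · exact AddSubmonoid.subset_closure (Or.inl ⟨i, rfl⟩)
  · exact AddSubmonoid.subset_closure (Or.inr rfl)

theorem stmt_18 (n d : ℕ) (a : Fin n → Fin d → ℤ) (w : Fin n → ℕ) (aelt : Fin d → ℤ)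
    (haS : aelt ∈ AddSubmonoid.closure (Set.range a))
    (happrox : ∀ x : Fin d → ℤ,
      (∃ r : Fin n → ℝ, (∀ i, 0 ≤ r i) ∧ ∀ j, (x j : ℝ) = ∑ i, r i * (a i j : ℝ)) →
      aelt + x ∈ AddSubmonoid.closure (Set.range a))
    (c : Fin d → ℤ) (cn1 : ℤ)
    (hc : ∃ (r : Fin n → ℝ) (rlast : ℝ), (∀ i, 0 ≤ r i ∧ r i ≤ 1) ∧ 0 ≤ rlast ∧ rlast ≤ 1 ∧
      (∀ j, (c j : ℝ) = ∑ i, r i * (a i j : ℝ)) ∧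
      (cn1 : ℝ) = ∑ i, r i * (w i : ℝ) + rlast) :
    ∃ δ : ℕ,
      ((aelt, (δ : ℤ)) : (Fin d → ℤ) × ℤ) ∈ AddSubmonoid.closure
        (Set.range (fun i : Fin n => ((a i, (w i : ℤ)) : (Fin d → ℤ) × ℤ))
          ∪ {(((0 : Fin d → ℤ), (1 : ℤ)) : (Fin d → ℤ) × ℤ)}) ∧
      (aelt, (δ : ℤ)) + (c, cn1) ∈ AddSubmonoid.closure
        (Set.range (fun i : Fin n => ((a i, (w i : ℤ)) : (Fin d → ℤ) × ℤ))
          ∪ {(((0 : Fin d → ℤ), (1 : ℤ)) : (Fin d → ℤ) × ℤ)}) := by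
  obtain ⟨r, rlast, hr01, hrl0, hrl1, hcr, hcn1⟩ := hc
  have hcn1_nonneg : 0 ≤ cn1 := by
    have : (0 : ℝ) ≤ (cn1 : ℝ) := by
      rw [hcn1]
      have : (0:ℝ) ≤ ∑ i, r i * (w i : ℝ) :=
        Finset.sum_nonneg fun i _ => mul_nonneg (hr01 i).1 (by positivity)
      linarith
    exact_mod_cast this
  have hac : aelt + c ∈ AddSubmonoid.closure (Set.range a) :=
    happrox c ⟨r, fun i => (hr01 i).1, hcr⟩
  obtain ⟨m, hm⟩ := exists_rep' a haS
  obtain ⟨m', hm'⟩ := exists_rep' a hac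
  set N := ∑ i, m i * w i with hN
  set N' := ∑ i, m' i * w i with hN'
  refine ⟨max N N', ?_, ?_⟩
  · have h := mem_rep n d a w m (max N N' - N)
    have heq : ((aelt, ((max N N' : ℕ) : ℤ)) : (Fin d → ℤ) × ℤ)
        = (∑ i, m i • a i, ((N : ℕ) : ℤ) + ((max N N' - N : ℕ) : ℤ)) := by
      refine Prod.ext (by rw [hm]) ?_
      simp only
      push_cast [Nat.cast_sub (le_max_left N N')]
      ring
    rw [heq]; exact h
  · have hk' : (N' : ℤ) ≤ (max N N' : ℕ) + cn1 := by
      have : (N' : ℤ) ≤ (max N N' : ℕ) := by exact_mod_cast le_max_right N N'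
      omega
    obtain ⟨k', hk'eq⟩ : ∃ k' : ℕ, ((max N N' : ℕ) : ℤ) + cn1 = (N' : ℤ) + (k' : ℤ) := by
      refine ⟨(((max N N' : ℕ) : ℤ) + cn1 - N').toNat, ?_⟩
      rw [Int.toNat_of_nonneg (by omega)]; ring
    have h := mem_rep n d a w m' k'
    have heq : ((aelt, ((max N N' : ℕ) : ℤ)) + (c, cn1) : (Fin d → ℤ) × ℤ)
        = (∑ i, m' i • a i, ((N' : ℕ) : ℤ) + (k' : ℤ)) := by
      refine Prod.ext (by rw [← hm']; rfl) ?_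
      simpa using hk'eq
    rw [heq]; exact h
end
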